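/- For any set S, the functor S ↦ ℤ_nil[S] from sets to square groups is left adjoint to the functor assigning to a square group M its set of linear elements 𝕃(M) = {x ∈ M_e : H(x) = 0}. That is, square group morphisms ℤ_nil[S] → M correspond naturally to maps of sets S → 𝕃(M). -/

import Mathlib

/-- Cross-effect of a map `H` into an abelian group: `(x|y)_H = H(x+y) - H x - H y`. -/
def crossEff {Me : Type*} [AddGroup Me] {Mee : Type*} [AddCommGroup Mee]
    (H : Me → Mee) (x y : Me) : Mee :=
  H (x + y) - H x - H y

/-- The axioms of a square group `M_e --H--> M_ee --P--> M_e`: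
`M_ee` abelian, `P` a homomorphism, `H` quadratic (bilinear cross-effect), and
`(Pa|y)_H = 0 = (x|Pb)_H`, `P (x|y)_H = -x-y+x+y`, `PHP = 2P`. -/
structure IsSquareGroup {Me : Type*} [AddGroup Me] {Mee : Type*} [AddCommGroup Mee]
    (P : Mee →+ Me) (H : Me → Mee) : Prop where
  cross_add_left : ∀ x x' y : Me, crossEff H (x + x') y = crossEff H x y + crossEff H x' y
  cross_add_right : ∀ x y y' : Me, crossEff H x (y + y') = crossEff H x y + crossEff H x y'
  cross_P_left : ∀ (a : Mee) (y : Me), crossEff H (P a) y = 0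
  cross_P_right : ∀ (x : Me) (b : Mee), crossEff H x (P b) = 0
  P_cross : ∀ x y : Me, P (crossEff H x y) = -x - y + x + y
  PHP : ∀ a : Mee, P (H (P a)) = P a + P a

open scoped TensorProduct
open scoped commutatorElement

/-- Morphism of square groups. -/
def IsSGMorphism {Me : Type*} [AddGroup Me] {Mee : Type*} [AddCommGroup Mee]
    {Ne : Type*} [AddGroup Ne] {Nee : Type*} [AddCommGroup Nee]
    (P : Mee →+ Me) (H : Me → Mee) (P' : Nee →+ Ne) (H' : Ne → Nee)
    (fe : Me → Ne) (fee : Mee → Nee) : Prop :=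
  (∀ x y : Me, fe (x + y) = fe x + fe y) ∧
  (∀ a b : Mee, fee (a + b) = fee a + fee b) ∧
  (∀ a : Mee, fe (P a) = P' (fee a)) ∧
  (∀ x : Me, fee (H x) = H' (fe x))

/-- The free nilpotent group of class two on `S`, written additively. -/
abbrev FreeNil2Add (S : Type*) : Type _ :=
  Additive (FreeGroup S ⧸ (⊤ : Subgroup (FreeGroup S)).lowerCentralSeries 2)

/-- The generator of the free nil₂-group corresponding to `s ∈ S`. -/
def nil2Gen {S : Type*} (s : S) : FreeNil2Add S :=
  Additive.ofMul (QuotientGroup.mk (FreeGroup.of s))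


/-!
The e-level of a square group is nilpotent of class two: `P (x|y)_H = -x-y+x+y` puts every
commutator in the image of `P`, which is central because `(Pa|y)_H = 0`. So a map
`f : S → 𝕃(M)` extends uniquely to a homomorphism `fe : ⟨S⟩ⁿⁱˡ → M_e`. The ee-level
`ℤ[S] ⊗ ℤ[S]` is free on the elements `t ⊗ s = (s|t)_H`, so a morphism has to send `t ⊗ s`
to `(f s|f t)_H`, and this formula defines a homomorphism `fee`. Compatibility with `P` is the
commutator identity again. For compatibility with `H`, both `fee ∘ H` and `H ∘ fe` are quadratic;
their cross-effects agree on pairs of generators and their values agree on generators (both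
vanish, as `H (f s) = 0`), and a quadratic map is determined by these data.
-/

section Quadratic

variable {G : Type*} [AddGroup G] {A : Type*} [AddCommGroup A]

structure IsQuadratic (Q : G → A) : Prop where
  cross_add_left : ∀ x x' y : G, crossEff Q (x + x') y = crossEff Q x y + crossEff Q x' y
  cross_add_right : ∀ x y y' : G, crossEff Q x (y + y') = crossEff Q x y + crossEff Q x y'

theorem IsSquareGroup.isQuadratic {P : A →+ G} {H : G → A} (h : IsSquareGroup P H) :
    IsQuadratic H :=
  ⟨h.cross_add_left, h.cross_add_right⟩

theorem crossEff_comp_addMonoidHom {G' : Type*} [AddGroup G'] (Q : G → A) (f : G' →+ G)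
    (x y : G') : crossEff (Q ∘ f) x y = crossEff Q (f x) (f y) := by
  simp only [crossEff, Function.comp_apply, map_add]

theorem crossEff_addMonoidHom_comp {B : Type*} [AddCommGroup B] (φ : A →+ B) (Q : G → A)
    (x y : G) : crossEff (φ ∘ Q) x y = φ (crossEff Q x y) := by
  simp only [crossEff, Function.comp_apply, map_sub]

theorem IsQuadratic.comp_addMonoidHom {G' : Type*} [AddGroup G'] {Q : G → A}
    (hQ : IsQuadratic Q) (f : G' →+ G) : IsQuadratic (Q ∘ f) where
  cross_add_left x x' y := by
    simp only [crossEff_comp_addMonoidHom, map_add, hQ.cross_add_left]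
  cross_add_right x y y' := by
    simp only [crossEff_comp_addMonoidHom, map_add, hQ.cross_add_right]

theorem IsQuadratic.addMonoidHom_comp {B : Type*} [AddCommGroup B] {Q : G → A}
    (hQ : IsQuadratic Q) (φ : A →+ B) : IsQuadratic (φ ∘ Q) where
  cross_add_left x x' y := by
    simp only [crossEff_addMonoidHom_comp, hQ.cross_add_left, map_add]
  cross_add_right x y y' := by
    simp only [crossEff_addMonoidHom_comp, hQ.cross_add_right, map_add]

theorem IsQuadratic.crossEff_eq_of_closure_eq_top {Q₁ Q₂ : G → A} (h₁ : IsQuadratic Q₁)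
    (h₂ : IsQuadratic Q₂) {s : Set G} (hs : AddSubgroup.closure s = ⊤)
    (hcross : ∀ x ∈ s, ∀ y ∈ s, crossEff Q₁ x y = crossEff Q₂ x y) (x y : G) :
    crossEff Q₁ x y = crossEff Q₂ x y := by
  have left (y : G) (hy : y ∈ s) (x : G) : crossEff Q₁ x y = crossEff Q₂ x y :=
    DFunLike.congr_fun (AddMonoidHom.eq_of_eqOn_dense hs
      (f := AddMonoidHom.mk' (crossEff Q₁ · y) (h₁.cross_add_left · · y))
      (g := AddMonoidHom.mk' (crossEff Q₂ · y) (h₂.cross_add_left · · y))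
      fun x hx => hcross x hx y hy) x
  exact DFunLike.congr_fun (AddMonoidHom.eq_of_eqOn_dense hs
    (f := AddMonoidHom.mk' (crossEff Q₁ x) (h₁.cross_add_right x))
    (g := AddMonoidHom.mk' (crossEff Q₂ x) (h₂.cross_add_right x))
    fun y hy => left y hy x) y

theorem eq_of_crossEff_eq {Q₁ Q₂ : G → A} (hcross : ∀ x y, crossEff Q₁ x y = crossEff Q₂ x y)
    {s : Set G} (hs : AddSubgroup.closure s = ⊤) (hQ : Set.EqOn Q₁ Q₂ s) : Q₁ = Q₂ := by
  let D : G →+ A := AddMonoidHom.mk' (Q₁ - Q₂) fun x y => by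
    have h := hcross x y
    simp only [crossEff] at h
    simp only [Pi.sub_apply]
    linear_combination (norm := abel) h
  have hD : D = 0 := AddMonoidHom.eq_of_eqOn_dense hs fun x hx => sub_eq_zero.mpr (hQ hx)
  exact sub_eq_zero.mp (congrArg DFunLike.coe hD)

theorem IsQuadratic.eq_of_closure_eq_top {Q₁ Q₂ : G → A} (h₁ : IsQuadratic Q₁)
    (h₂ : IsQuadratic Q₂) {s : Set G} (hs : AddSubgroup.closure s = ⊤) (hQ : Set.EqOn Q₁ Q₂ s)
    (hcross : ∀ x ∈ s, ∀ y ∈ s, crossEff Q₁ x y = crossEff Q₂ x y) : Q₁ = Q₂ :=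
  eq_of_crossEff_eq (h₁.crossEff_eq_of_closure_eq_top h₂ hs hcross) hs hQ

end Quadratic

namespace IsSquareGroup

variable {Me : Type*} [AddGroup Me] {Mee : Type*} [AddCommGroup Mee]
  {P : Mee →+ Me} {H : Me → Mee}

theorem addCommute_P (hsq : IsSquareGroup P H) (a : Mee) (z : Me) : AddCommute (P a) z := by
  have h := hsq.P_cross (P a) z
  rw [hsq.cross_P_left, map_zero] at h
  show P a + z = z + P a
  calc P a + z = z + P a + (-P a - z + P a + z) := by
        simp only [sub_eq_add_neg, add_assoc, add_neg_cancel_left]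
    _ = z + P a := by rw [← h, add_zero]

theorem add_sub_sub_eq_P_crossEff (hsq : IsSquareGroup P H) (x y : Me) :
    x + y - x - y = P (crossEff H x y) := by
  have h : P (crossEff H x y) + (y + x) = x + y := by
    rw [(hsq.addCommute_P _ _).eq, hsq.P_cross]
    simp only [sub_eq_add_neg, add_assoc, add_neg_cancel_left]
  rw [eq_sub_of_add_eq h]
  simp only [sub_eq_add_neg, neg_add_rev, add_assoc]

theorem lowerCentralSeries_two_eq_bot (hsq : IsSquareGroup P H) :
    (⊤ : Subgroup (Multiplicative Me)).lowerCentralSeries 2 = ⊥ := by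
  rw [Subgroup.lowerCentralSeries_succ, Subgroup.commutator_eq_bot_iff_le_centralizer,
    Subgroup.top_lowerCentralSeries_one, commutator_def, Subgroup.commutator_le]
  intro g₁ _ g₂ _
  rw [Subgroup.mem_centralizer_iff]
  intro z _
  have hcomm : ⁅g₁, g₂⁆ = Multiplicative.ofAdd (P (crossEff H g₁.toAdd g₂.toAdd)) := by
    rw [← hsq.add_sub_sub_eq_P_crossEff, commutatorElement_def]
    simp only [sub_eq_add_neg]
    rfl
  rw [hcomm]
  exact Multiplicative.toAdd.injective (hsq.addCommute_P _ z.toAdd).eq.symm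

end IsSquareGroup

namespace FreeNil2Add

variable {S : Type*}

theorem closure_range_nil2Gen : AddSubgroup.closure (Set.range (nil2Gen (S := S))) = ⊤ := by
  have hrange : Set.range (nil2Gen (S := S)) =
      Additive.toMul ⁻¹' Set.range (QuotientGroup.mk' _ ∘ FreeGroup.of) := by
    ext x
    exact ⟨fun ⟨s, hs⟩ => ⟨s, congrArg Additive.toMul hs⟩,
      fun ⟨s, hs⟩ => ⟨s, congrArg Additive.ofMul hs⟩⟩
  rw [hrange, ← Subgroup.toAddSubgroup_closure, Set.range_comp, ← MonoidHom.map_closure,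
    FreeGroup.closure_range_of, Subgroup.map_top_of_surjective _ (QuotientGroup.mk'_surjective _)]
  rfl

variable {G : Type*} [AddGroup G]

def lift (hG : (⊤ : Subgroup (Multiplicative G)).lowerCentralSeries 2 = ⊥) (f : S → G) :
    FreeNil2Add S →+ G :=
  MonoidHom.toAdditiveLeft <|
    QuotientGroup.lift ((⊤ : Subgroup (FreeGroup S)).lowerCentralSeries 2)
      (FreeGroup.lift (Multiplicative.ofAdd ∘ f)) fun x hx => by
      have hmap : (Subgroup.lowerCentralSeries ⊤ 2).map
          (FreeGroup.lift (Multiplicative.ofAdd ∘ f)) ≤ ⊥ := by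
        rw [← hG, Subgroup.map_lowerCentralSeries]
        exact Subgroup.lowerCentralSeries_mono 2 le_top
      exact MonoidHom.mem_ker.mpr (Subgroup.mem_bot.mp (hmap ⟨x, hx, rfl⟩))

variable (hG : (⊤ : Subgroup (Multiplicative G)).lowerCentralSeries 2 = ⊥) (f : S → G)

@[simp]
theorem lift_nil2Gen (s : S) : lift hG f (nil2Gen s) = f s := by
  show Multiplicative.toAdd (FreeGroup.lift _ (FreeGroup.of s)) = f s
  simp

theorem lift_commutator (s t : S) :
    lift hG f (Additive.ofMul ⁅(QuotientGroup.mk (FreeGroup.of t) :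
      FreeGroup S ⧸ (⊤ : Subgroup (FreeGroup S)).lowerCentralSeries 2),
        QuotientGroup.mk (FreeGroup.of s)⁆) = f t + f s - f t - f s := by
  show Multiplicative.toAdd (FreeGroup.lift _ ⁅FreeGroup.of t, FreeGroup.of s⁆) = _
  simp [commutatorElement_def, sub_eq_add_neg]

end FreeNil2Add

section SingleTmulSingle

variable (S : Type*)

noncomputable def singleTmulBasis : Module.Basis (S × S) ℤ ((S →₀ ℤ) ⊗[ℤ] (S →₀ ℤ)) :=
  Finsupp.basisSingleOne.tensorProduct Finsupp.basisSingleOne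

variable {S}

@[simp]
theorem singleTmulBasis_apply (p : S × S) :
    singleTmulBasis S p = Finsupp.single p.1 1 ⊗ₜ[ℤ] Finsupp.single p.2 1 :=
  (Module.Basis.tensorProduct_apply' _ _ p).trans (by simp)

theorem closure_range_single_tmul_single :
    AddSubgroup.closure (Set.range fun p : S × S =>
      Finsupp.single p.1 (1 : ℤ) ⊗ₜ[ℤ] Finsupp.single p.2 (1 : ℤ)) = ⊤ := by
  rw [← Submodule.span_int_eq_addSubgroupClosure]
  simp only [← singleTmulBasis_apply, Module.Basis.span_eq, Submodule.top_toAddSubgroup]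

theorem singleTmulBasis_constr_single_tmul_single {A : Type*} [AddCommGroup A]
    (g : S × S → A) (u v : S) :
    (singleTmulBasis S).constr ℤ g (Finsupp.single u 1 ⊗ₜ Finsupp.single v 1) = g (u, v) := by
  simpa using (singleTmulBasis S).constr_basis ℤ g (u, v)

end SingleTmulSingle

theorem IsSGMorphism.map_crossEff {Me : Type*} [AddGroup Me] {Mee : Type*} [AddCommGroup Mee]
    {Ne : Type*} [AddGroup Ne] {Nee : Type*} [AddCommGroup Nee]
    {P : Mee →+ Me} {H : Me → Mee} {P' : Nee →+ Ne} {H' : Ne → Nee}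
    {fe : Me → Ne} {fee : Mee → Nee} (hf : IsSGMorphism P H P' H' fe fee) (x y : Me) :
    fee (crossEff H x y) = crossEff H' (fe x) (fe y) := by
  have hsub (a b : Mee) : fee (a - b) = fee a - fee b := map_sub (AddMonoidHom.mk' fee hf.2.1) a b
  simp only [crossEff, hsub, hf.2.2.2, hf.1]

section Znil

variable {S : Type*} {PZ : ((S →₀ ℤ) ⊗[ℤ] (S →₀ ℤ)) →+ FreeNil2Add S}
  {HZ : FreeNil2Add S → (S →₀ ℤ) ⊗[ℤ] (S →₀ ℤ)}
  {Me : Type*} [AddGroup Me] {Mee : Type*} [AddCommGroup Mee] {P : Mee →+ Me} {H : Me → Mee}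

theorem IsSGMorphism.eq_of_eqOn_nil2Gen
    (hcrZ : ∀ s t : S, crossEff HZ (nil2Gen s) (nil2Gen t) =
      Finsupp.single t 1 ⊗ₜ[ℤ] Finsupp.single s 1)
    {q₁ q₂ : (FreeNil2Add S → Me) × (((S →₀ ℤ) ⊗[ℤ] (S →₀ ℤ)) → Mee)}
    (h₁ : IsSGMorphism PZ HZ P H q₁.1 q₁.2) (h₂ : IsSGMorphism PZ HZ P H q₂.1 q₂.2)
    (hgen : ∀ s, q₁.1 (nil2Gen s) = q₂.1 (nil2Gen s)) : q₁ = q₂ := by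
  have he : AddMonoidHom.mk' q₁.1 h₁.1 = AddMonoidHom.mk' q₂.1 h₂.1 :=
    AddMonoidHom.eq_of_eqOn_dense FreeNil2Add.closure_range_nil2Gen <| by
      rintro _ ⟨s, rfl⟩
      exact hgen s
  have hee : AddMonoidHom.mk' q₁.2 h₁.2.1 = AddMonoidHom.mk' q₂.2 h₂.2.1 :=
    AddMonoidHom.eq_of_eqOn_dense closure_range_single_tmul_single <| by
      rintro _ ⟨⟨u, v⟩, rfl⟩
      change q₁.2 (Finsupp.single u 1 ⊗ₜ Finsupp.single v 1) =
        q₂.2 (Finsupp.single u 1 ⊗ₜ Finsupp.single v 1)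
      rw [← hcrZ, h₁.map_crossEff, h₂.map_crossEff, hgen, hgen]
  exact Prod.ext (congrArg DFunLike.coe he) (congrArg DFunLike.coe hee)

theorem isSGMorphism_lift_constr_crossEff (hZsq : IsSquareGroup PZ HZ)
    (hPZ : ∀ s t : S, PZ (Finsupp.single s 1 ⊗ₜ[ℤ] Finsupp.single t 1) =
      Additive.ofMul ⁅(QuotientGroup.mk (FreeGroup.of t) :
          FreeGroup S ⧸ (⊤ : Subgroup (FreeGroup S)).lowerCentralSeries 2),
        QuotientGroup.mk (FreeGroup.of s)⁆)
    (hHZ : ∀ s : S, HZ (nil2Gen s) = 0)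
    (hcrZ : ∀ s t : S, crossEff HZ (nil2Gen s) (nil2Gen t) =
      Finsupp.single t 1 ⊗ₜ[ℤ] Finsupp.single s 1)
    (hsq : IsSquareGroup P H) {f : S → Me} (hf : ∀ s, H (f s) = 0) :
    IsSGMorphism PZ HZ P H (FreeNil2Add.lift hsq.lowerCentralSeries_two_eq_bot f)
      ((singleTmulBasis S).constr ℤ fun p => crossEff H (f p.2) (f p.1)) := by
  set fe := FreeNil2Add.lift hsq.lowerCentralSeries_two_eq_bot f
  set fee := ((singleTmulBasis S).constr ℤ fun p => crossEff H (f p.2) (f p.1)).toAddMonoidHom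
  have hP : fe.comp PZ = P.comp fee := by
    refine AddMonoidHom.eq_of_eqOn_dense closure_range_single_tmul_single ?_
    rintro _ ⟨⟨u, v⟩, rfl⟩
    simp only [AddMonoidHom.comp_apply, hPZ, fe, FreeNil2Add.lift_commutator, fee,
      LinearMap.toAddMonoidHom_coe, singleTmulBasis_constr_single_tmul_single,
      ← hsq.add_sub_sub_eq_P_crossEff]
  have hH : fee ∘ HZ = H ∘ fe := by
    refine (hZsq.isQuadratic.addMonoidHom_comp fee).eq_of_closure_eq_top
      (hsq.isQuadratic.comp_addMonoidHom fe) FreeNil2Add.closure_range_nil2Gen ?_ ?_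
    · rintro _ ⟨s, rfl⟩
      simp [fe, hHZ, hf]
    · rintro _ ⟨s, rfl⟩ _ ⟨t, rfl⟩
      rw [crossEff_addMonoidHom_comp, crossEff_comp_addMonoidHom, hcrZ]
      simp [fe, fee, singleTmulBasis_constr_single_tmul_single]
  exact ⟨map_add fe, map_add fee, DFunLike.congr_fun hP, congr_fun hH⟩

end Znil

/-- `ℤ_nil[-]` is left adjoint to the linear-elements functor `𝕃`:  given the square
group `ℤ_nil[S]` (with e-level `⟨S⟩ⁿⁱˡ`, ee-level `ℤ[S] ⊗ ℤ[S]`, `P(s⊗t) = [t,s]`,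
`H(s) = 0` and `(s|t)_H = t⊗s`), for any square group `M` the morphisms of square groups
`ℤ_nil[S] → M` correspond bijectively to maps of sets `S → 𝕃(M) = {x : H(x) = 0}`. -/
theorem znil_leftAdjoint_linearElements (S : Type*)
    (PZ : ((S →₀ ℤ) ⊗[ℤ] (S →₀ ℤ)) →+ FreeNil2Add S)
    (HZ : FreeNil2Add S → (S →₀ ℤ) ⊗[ℤ] (S →₀ ℤ))
    (hZsq : IsSquareGroup PZ HZ)
    (hPZ : ∀ s t : S, PZ (Finsupp.single s 1 ⊗ₜ[ℤ] Finsupp.single t 1) =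
      Additive.ofMul ⁅(QuotientGroup.mk (FreeGroup.of t) :
          FreeGroup S ⧸ (⊤ : Subgroup (FreeGroup S)).lowerCentralSeries 2),
        QuotientGroup.mk (FreeGroup.of s)⁆)
    (hHZ : ∀ s : S, HZ (nil2Gen s) = 0)
    (hcrZ : ∀ s t : S, crossEff HZ (nil2Gen s) (nil2Gen t) =
      Finsupp.single t 1 ⊗ₜ[ℤ] Finsupp.single s 1)
    {Me : Type*} [AddGroup Me] {Mee : Type*} [AddCommGroup Mee]
    (P : Mee →+ Me) (H : Me → Mee) (hsq : IsSquareGroup P H) :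
    (∀ (fe : FreeNil2Add S → Me) (fee : ((S →₀ ℤ) ⊗[ℤ] (S →₀ ℤ)) → Mee),
      IsSGMorphism PZ HZ P H fe fee → ∀ s : S, H (fe (nil2Gen s)) = 0) ∧
    (∀ f₀ : S → Me, (∀ s : S, H (f₀ s) = 0) →
      ∃! q : (FreeNil2Add S → Me) × (((S →₀ ℤ) ⊗[ℤ] (S →₀ ℤ)) → Mee),
        IsSGMorphism PZ HZ P H q.1 q.2 ∧ ∀ s : S, q.1 (nil2Gen s) = f₀ s) := by
  refine ⟨fun fe fee hf s => ?_, fun f₀ hf₀ => ?_⟩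
  · rw [← hf.2.2.2, hHZ]
    exact map_zero (AddMonoidHom.mk' fee hf.2.1)
  have hlift := isSGMorphism_lift_constr_crossEff hZsq hPZ hHZ hcrZ hsq hf₀
  refine ⟨(_, _), ⟨hlift, FreeNil2Add.lift_nil2Gen _ f₀⟩, fun q ⟨hq, hqgen⟩ => ?_⟩
  exact hq.eq_of_eqOn_nil2Gen hcrZ hlift fun s =>
    (hqgen s).trans (FreeNil2Add.lift_nil2Gen _ _ s).symm
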